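/- Let N ≥ 1 be an integer, let α ≥ N be an integer, and let s ∈ (1/2, 1]. If Σ_{k=α}^{∞} k^{−2s} ≤ (1+N)^{−s}, then dim_H(F_{α,N}) ≤ s. -/

import Mathlib

/-!
Write `t = T_N^n x` for `x` in the level-`n` cylinder with digits `ε_1, …, ε_n`. The identity
`x (q_n + t q_{n-1}) = p_n + t p_{n-1}` and the determinant `p_{n-1} q_n - p_n q_{n-1} = (-N)^n`
give `|x - p_n / q_n| ≤ N^n / q_n^2`, and `q_n ≥ ε_1 ⋯ ε_n`; so the cylinder has diameter at most
`2 N^n ∏ ε_i^{-2}`. Covering `F_{α,N}` by the level-`n` cylinders whose digits are all `≥ α`,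
`∑ diam^s ≤ 2^s (N^s ∑_{k ≥ α} k^{-2s})^n ≤ 2^s (N / (1 + N))^{sn} → 0`, so `H^s(F_{α,N}) = 0`.
The first term of the series gives `α^2 ≥ 1 + N > N`, so the diameters also tend to `0` uniformly.
-/

open MeasureTheory Filter Set
open scoped ENNReal

/-- The `N`-expansion map `T_N : [0,1] → [0,1]`,
`T_N x = N/x - ⌊N/x⌋` for `x ≠ 0`, `T_N 0 = 0`. -/
noncomputable def TN (N : ℕ) (x : ℝ) : ℝ :=
  if x = 0 then 0 else (N : ℝ) / x - (⌊(N : ℝ) / x⌋ : ℝ)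

/-- `digit N n x` is the `(n+1)`-st digit `ε_{n+1}(x)` of the `N`-expansion of `x`,
i.e. `ε_m(x) = digit N (m-1) x` for `m ≥ 1`. -/
noncomputable def digit (N : ℕ) (n : ℕ) (x : ℝ) : ℤ :=
  ⌊(N : ℝ) / ((TN N)^[n] x)⌋

/-- The set `E_M` of irrationals in `(0,1)` all of whose `N`-expansion digits lie in
`{N, …, M}`. -/
noncomputable def EM (N M : ℕ) : Set ℝ :=
  {x | x ∈ Set.Ioo (0 : ℝ) 1 ∧ Irrational x ∧
    ∀ n : ℕ, (N : ℤ) ≤ digit N n x ∧ digit N n x ≤ (M : ℤ)}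

/-- The set `F_{α,N}` of irrationals in `(0,1)` all of whose `N`-expansion digits
are at least `α`. -/
noncomputable def Fset (N : ℕ) (α : ℝ) : Set ℝ :=
  {x | x ∈ Set.Ioo (0 : ℝ) 1 ∧ Irrational x ∧ ∀ n : ℕ, α ≤ (digit N n x : ℝ)}

/-- The set `F_N` of irrationals in `(0,1)` whose `N`-expansion digits tend to infinity. -/
noncomputable def FNset (N : ℕ) : Set ℝ :=
  {x | x ∈ Set.Ioo (0 : ℝ) 1 ∧ Irrational x ∧
    Filter.Tendsto (fun n => digit N n x) Filter.atTop Filter.atTop}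

/-- Convergent denominators of the `N`-expansion with digit sequence `ε`
(where `ε i` is the `(i+1)`-st digit `ε_{i+1}`), shifted by one:
`qden N ε (n+1) = q_n`, so `qden N ε 0 = q_{-1} = 0`, `qden N ε 1 = q_0 = 1`,
and `q_n = ε_n q_{n-1} + N q_{n-2}`. -/
def qden (N : ℕ) (ε : ℕ → ℤ) : ℕ → ℤ
  | 0 => 0
  | 1 => 1
  | (n + 2) => ε n * qden N ε (n + 1) + (N : ℤ) * qden N ε n

/-- Convergent numerators of the `N`-expansion with digit sequence `ε`, shifted by one:
`pnum N ε (n+1) = p_n`, so `pnum N ε 0 = p_{-1} = 1`, `pnum N ε 1 = p_0 = 0`,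
and `p_n = ε_n p_{n-1} + N p_{n-2}`. -/
def pnum (N : ℕ) (ε : ℕ → ℤ) : ℕ → ℤ
  | 0 => 1
  | 1 => 0
  | (n + 2) => ε n * pnum N ε (n + 1) + (N : ℤ) * pnum N ε n

/-- The fundamental interval `I_n(ε_1, …, ε_n)`: irrationals in `(0,1)` whose first `n`
`N`-expansion digits are `ε 0, …, ε (n-1)` (i.e. `ε_i(x) = ε (i-1)` for `1 ≤ i ≤ n`). -/
noncomputable def fundInterval (N : ℕ) (n : ℕ) (ε : ℕ → ℤ) : Set ℝ :=
  {x | x ∈ Set.Ioo (0 : ℝ) 1 ∧ Irrational x ∧ ∀ i < n, digit N i x = ε i}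

open scoped Topology

theorem ENNReal.tsum_pi_fin_prod_eq_pow {ι : Type*} (g : ι → ℝ≥0∞) :
    ∀ n : ℕ, ∑' w : Fin n → ι, ∏ i, g (w i) = (∑' k, g k) ^ n
  | 0 => by simp
  | n + 1 => by
    rw [← (Fin.consEquiv fun _ => ι).tsum_eq, ENNReal.tsum_prod', pow_succ',
      ← ENNReal.tsum_mul_right]
    simp [Fin.prod_univ_succ, ENNReal.tsum_mul_left, ENNReal.tsum_pi_fin_prod_eq_pow g n]

theorem ENNReal.tendsto_mul_pow_atTop_nhds_zero {C ρ : ℝ≥0∞} (hC : C ≠ ∞) (hρ : ρ < 1) :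
    Tendsto (fun n : ℕ => C * ρ ^ n) atTop (𝓝 0) := by
  simpa using ENNReal.Tendsto.const_mul (ENNReal.tendsto_pow_atTop_nhds_zero_of_lt_one hρ)
    (Or.inr hC)

theorem dimH_le_of_covers {X : Type*} [EMetricSpace X] [MeasurableSpace X] [BorelSpace X]
    {ι : ℕ → Type*} [∀ n, Countable (ι n)] {E : Set X} {s : ℝ} (hs : 0 ≤ s)
    (t : ∀ n, ι n → Set X) (hE : ∀ n, E ⊆ ⋃ i, t n i) {r b : ℕ → ℝ≥0∞}
    (hr : Tendsto r atTop (𝓝 0)) (ht : ∀ n i, Metric.ediam (t n i) ≤ r n)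
    (hb : Tendsto b atTop (𝓝 0)) (htb : ∀ n, ∑' i, Metric.ediam (t n i) ^ s ≤ b n) :
    dimH E ≤ ENNReal.ofReal s := by
  have hμ : μH[s] E ≤ 0 := calc
    μH[s] E ≤ liminf (fun n => ∑' i, Metric.ediam (t n i) ^ s) atTop :=
      Measure.hausdorffMeasure_le_liminf_tsum s E r hr t (.of_forall ht) (.of_forall hE)
    _ ≤ liminf b atTop := liminf_le_liminf (.of_forall htb)
    _ = 0 := hb.liminf_eq
  refine dimH_le_of_hausdorffMeasure_ne_top ?_
  rw [Real.coe_toNNReal s hs, nonpos_iff_eq_zero.mp hμ]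
  exact ENNReal.zero_ne_top

theorem summable_add_nat_rpow_neg {a p : ℝ} (ha : 0 < a) (hp : 1 < p) :
    Summable fun j : ℕ => (a + j) ^ (-p) := by
  refine ((Real.summable_one_div_nat_add_rpow a p).mpr hp).congr fun j => ?_
  rw [abs_of_pos (by positivity), Real.rpow_neg (by positivity), one_div, add_comm]

theorem le_sq_of_tsum_add_nat_rpow_le {a b s : ℝ} (ha : 0 < a) (hb : 0 < b) (hs : 0 < s)
    (hsum : Summable fun j : ℕ => (a + j) ^ (-(2 * s)))
    (h : ∑' j : ℕ, (a + j) ^ (-(2 * s)) ≤ b ^ (-s)) : b ≤ a ^ 2 := by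
  have hfirst : (a ^ 2) ^ (-s) ≤ b ^ (-s) := by
    refine le_trans ?_ h
    rw [← Real.rpow_natCast_mul ha.le, Nat.cast_ofNat, ← neg_mul_eq_mul_neg]
    simpa using hsum.le_tsum 0 fun j _ => by positivity
  exact (Real.rpow_le_rpow_iff_of_neg (by positivity) hb (by linarith)).mp hfirst

section NExpansion

variable {N : ℕ} {ε : ℕ → ℤ}

theorem TN_eq_fract {x : ℝ} (hx : x ≠ 0) : TN N x = Int.fract (N / x) := by
  rw [TN, if_neg hx, Int.fract]

theorem mul_floor_add_TN {y : ℝ} (hy : y ≠ 0) : y * (⌊(N : ℝ) / y⌋ + TN N y) = N := by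
  rw [TN_eq_fract hy, Int.floor_add_fract]
  field_simp

theorem irrational_TN (hN : N ≠ 0) {x : ℝ} (hx : Irrational x) : Irrational (TN N x) := by
  rw [TN_eq_fract hx.ne_zero, Int.fract]
  exact (hx.natCast_div hN).sub_intCast _

theorem TN_mem_Ioo (hN : N ≠ 0) {x : ℝ} (hx : Irrational x) : TN N x ∈ Ioo 0 1 := by
  rw [TN_eq_fract hx.ne_zero]
  exact ⟨Int.fract_pos.mpr ((hx.natCast_div hN).ne_int _), Int.fract_lt_one _⟩

theorem iterate_TN_mem_Ioo (hN : N ≠ 0) {x : ℝ} (hx : x ∈ Ioo 0 1) (hirr : Irrational x) :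
    ∀ n, (TN N)^[n] x ∈ Ioo 0 1 ∧ Irrational ((TN N)^[n] x)
  | 0 => ⟨hx, hirr⟩
  | n + 1 => by
    obtain ⟨-, h⟩ := iterate_TN_mem_Ioo hN hx hirr n
    rw [Function.iterate_succ_apply']
    exact ⟨TN_mem_Ioo hN h, irrational_TN hN h⟩

theorem fundInterval_mono {n m : ℕ} (h : m ≤ n) (ε : ℕ → ℤ) :
    fundInterval N n ε ⊆ fundInterval N m ε :=
  fun _ ⟨hx, hirr, hd⟩ => ⟨hx, hirr, fun i hi => hd i (by omega)⟩

@[simp] theorem qden_add_two (n : ℕ) : qden N ε (n + 2) = ε n * qden N ε (n + 1) + N * qden N ε n :=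
  rfl

@[simp] theorem pnum_add_two (n : ℕ) : pnum N ε (n + 2) = ε n * pnum N ε (n + 1) + N * pnum N ε n :=
  rfl

theorem qden_nonneg (hε : ∀ i, 0 ≤ ε i) : ∀ n, 0 ≤ qden N ε n
  | 0 => le_rfl
  | 1 => zero_le_one
  | n + 2 => by
    rw [qden_add_two]
    have := qden_nonneg hε n
    have := qden_nonneg hε (n + 1)
    have := hε n
    positivity

theorem prod_le_qden (hε : ∀ i, 0 ≤ ε i) : ∀ n, ∏ i ∈ Finset.range n, ε i ≤ qden N ε (n + 1)
  | 0 => le_rfl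
  | n + 1 => by
    rw [Finset.prod_range_succ, qden_add_two, mul_comm]
    have := qden_nonneg (N := N) hε n
    have := hε n
    nlinarith [prod_le_qden hε n]

theorem pnum_mul_qden_sub (n : ℕ) :
    pnum N ε n * qden N ε (n + 1) - pnum N ε (n + 1) * qden N ε n = (-(N : ℤ)) ^ n := by
  induction n with
  | zero => simp [pnum, qden]
  | succ n ih =>
    rw [qden_add_two, pnum_add_two, pow_succ]
    linear_combination (-(N : ℤ)) * ih

theorem mul_qden_add_eq (hN : N ≠ 0) :
    ∀ {n : ℕ} {x : ℝ}, x ∈ fundInterval N n ε →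
      x * (qden N ε (n + 1) + (TN N)^[n] x * qden N ε n) =
        pnum N ε (n + 1) + (TN N)^[n] x * pnum N ε n
  | 0, _, _ => by simp [qden, pnum]
  | n + 1, x, hx => by
    have ih := mul_qden_add_eq hN (fundInterval_mono n.le_succ ε hx)
    obtain ⟨hxI, hirr, hd⟩ := hx
    have hrec := mul_floor_add_TN (N := N) (iterate_TN_mem_Ioo hN hxI hirr n).2.ne_zero
    rw [← digit, hd n n.lt_succ_self, ← Function.iterate_succ_apply' (TN N)] at hrec
    push_cast [qden_add_two, pnum_add_two]
    linear_combination ((ε n : ℝ) + (TN N)^[n + 1] x) * ih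
      + ((pnum N ε n : ℝ) - x * qden N ε n) * hrec

theorem abs_sub_pnum_div_qden_le (hN : N ≠ 0) (hε : ∀ i, 1 ≤ ε i) {n : ℕ} {x : ℝ}
    (hx : x ∈ fundInterval N n ε) :
    |x - pnum N ε (n + 1) / qden N ε (n + 1)| ≤ (N : ℝ) ^ n / (qden N ε (n + 1) : ℝ) ^ 2 := by
  have hε0 : ∀ i, 0 ≤ ε i := fun i => zero_le_one.trans (hε i)
  obtain ⟨ht0, ht1⟩ := (iterate_TN_mem_Ioo hN hx.1 hx.2.1 n).1
  have hkey := mul_qden_add_eq hN hx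
  set t := (TN N)^[n] x
  have hdet : (pnum N ε n : ℝ) * qden N ε (n + 1) - pnum N ε (n + 1) * qden N ε n
      = (-(N : ℝ)) ^ n := by exact_mod_cast pnum_mul_qden_sub n
  have hQ : (1 : ℝ) ≤ qden N ε (n + 1) := by
    exact_mod_cast (Finset.one_le_prod fun i _ => hε i).trans (prod_le_qden hε0 n)
  have hq : (0 : ℝ) ≤ qden N ε n := by exact_mod_cast qden_nonneg hε0 n
  set Q : ℝ := (qden N ε (n + 1) : ℝ)
  set q : ℝ := (qden N ε n : ℝ)
  have herr : x - pnum N ε (n + 1) / Q = t * (-(N : ℝ)) ^ n / (Q * (Q + t * q)) := by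
    have : 0 < Q + t * q := by positivity
    field_simp
    linear_combination Q * hkey + t * hdet
  rw [herr, abs_div, abs_mul, abs_pow, abs_neg, Nat.abs_cast, abs_of_pos ht0,
    abs_of_pos (by positivity), sq]
  gcongr
  · exact mul_le_of_le_one_left (by positivity) ht1.le
  · nlinarith

theorem ediam_fundInterval_le (hN : N ≠ 0) (hε : ∀ i, 1 ≤ ε i) (n : ℕ) :
    Metric.ediam (fundInterval N n ε) ≤
      ENNReal.ofReal (2 * N ^ n / (∏ i ∈ Finset.range n, (ε i : ℝ)) ^ 2) := by
  refine Metric.ediam_le_of_forall_dist_le fun x hx y hy => ?_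
  have hprod : (1 : ℝ) ≤ ∏ i ∈ Finset.range n, (ε i : ℝ) :=
    Finset.one_le_prod fun i _ => by exact_mod_cast hε i
  have hQ : ∏ i ∈ Finset.range n, (ε i : ℝ) ≤ qden N ε (n + 1) := by
    exact_mod_cast prod_le_qden (fun i => zero_le_one.trans (hε i)) n
  calc dist x y ≤ dist x (pnum N ε (n + 1) / qden N ε (n + 1))
        + dist y (pnum N ε (n + 1) / qden N ε (n + 1)) := dist_triangle_right _ _ _
    _ ≤ 2 * N ^ n / (qden N ε (n + 1) : ℝ) ^ 2 := by
        rw [Real.dist_eq, Real.dist_eq, mul_div_assoc, two_mul]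
        exact add_le_add (abs_sub_pnum_div_qden_le hN hε hx) (abs_sub_pnum_div_qden_le hN hε hy)
    _ ≤ 2 * N ^ n / (∏ i ∈ Finset.range n, (ε i : ℝ)) ^ 2 := by gcongr

variable {n : ℕ} {α : ℤ}

/-- Level-`n` cylinders meeting `F_{α,N}` are indexed by the offsets `w i = ε_{i+1} - α ≥ 0`. -/
def offsetDigits (α : ℤ) {n : ℕ} (w : Fin n → ℕ) (i : ℕ) : ℤ :=
  α + if h : i < n then (w ⟨i, h⟩ : ℤ) else 0

theorem Fset_subset_iUnion_fundInterval (n : ℕ) :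
    Fset N α ⊆ ⋃ w : Fin n → ℕ, fundInterval N n (offsetDigits α w) := by
  rintro x ⟨hx, hirr, hd⟩
  refine mem_iUnion.mpr ⟨fun i => (digit N i x - α).toNat, hx, hirr, fun i hi => ?_⟩
  have : α ≤ digit N i x := by exact_mod_cast hd i
  simp only [offsetDigits, dif_pos hi]
  omega

theorem prod_range_offsetDigits (α : ℤ) (w : Fin n → ℕ) :
    ∏ i ∈ Finset.range n, (offsetDigits α w i : ℝ) = ∏ i, ((α : ℝ) + w i) := by
  rw [← Fin.prod_univ_eq_prod_range]
  simp [offsetDigits]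

theorem ediam_fundInterval_offsetDigits_le (hN : N ≠ 0) (hα : 1 ≤ α) (w : Fin n → ℕ) :
    Metric.ediam (fundInterval N n (offsetDigits α w)) ≤
      ENNReal.ofReal (2 * N ^ n / (∏ i, ((α : ℝ) + w i)) ^ 2) := by
  rw [← prod_range_offsetDigits]
  refine ediam_fundInterval_le hN (fun i => ?_) n
  unfold offsetDigits
  split <;> omega

theorem ediam_fundInterval_offsetDigits_le_pow (hN : N ≠ 0) (hα : 1 ≤ α) (w : Fin n → ℕ) :
    Metric.ediam (fundInterval N n (offsetDigits α w)) ≤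
      ENNReal.ofReal 2 * ENNReal.ofReal (N / (α : ℝ) ^ 2) ^ n := by
  have hα' : (1 : ℝ) ≤ α := by exact_mod_cast hα
  have hprod : (α : ℝ) ^ n ≤ ∏ i, ((α : ℝ) + w i) := by
    calc (α : ℝ) ^ n = ∏ _i : Fin n, (α : ℝ) := by simp
      _ ≤ _ := Finset.prod_le_prod (fun _ _ => by positivity) fun i _ => by simp
  refine (ediam_fundInterval_offsetDigits_le hN hα w).trans ?_
  rw [← ENNReal.ofReal_pow (by positivity), ← ENNReal.ofReal_mul zero_le_two, div_pow, ← pow_mul,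
    pow_mul', mul_div_assoc]
  gcongr

theorem ediam_fundInterval_offsetDigits_rpow_le (hN : N ≠ 0) (hα : 1 ≤ α) {s : ℝ} (hs : 0 ≤ s)
    (w : Fin n → ℕ) :
    Metric.ediam (fundInterval N n (offsetDigits α w)) ^ s ≤
      ENNReal.ofReal (2 ^ s) * ENNReal.ofReal (N ^ s) ^ n *
        ∏ i, ENNReal.ofReal (((α : ℝ) + w i) ^ (-(2 * s))) := by
  have hα' : (1 : ℝ) ≤ α := by exact_mod_cast hα
  set P := ∏ i, ((α : ℝ) + w i)
  have hP : 0 < P := Finset.prod_pos fun i _ => by positivity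
  have hbound :
      (2 * N ^ n / P ^ 2) ^ s = 2 ^ s * (N ^ s) ^ n * ∏ i, ((α : ℝ) + w i) ^ (-(2 * s)) := by
    rw [Real.finsetProd_rpow _ _ fun i _ => by positivity,
      Real.div_rpow (by positivity) (by positivity),
      Real.mul_rpow zero_le_two (by positivity), ← Real.rpow_pow_comm (Nat.cast_nonneg N),
      ← Real.rpow_natCast_mul hP.le, Real.rpow_neg hP.le, div_eq_mul_inv]
    norm_num
  calc Metric.ediam (fundInterval N n (offsetDigits α w)) ^ s
      ≤ ENNReal.ofReal (2 * N ^ n / P ^ 2) ^ s := by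
        gcongr
        exact ediam_fundInterval_offsetDigits_le hN hα w
    _ = _ := by
        rw [ENNReal.ofReal_rpow_of_nonneg (by positivity) hs, hbound,
          ENNReal.ofReal_mul (by positivity), ENNReal.ofReal_mul (by positivity),
          ENNReal.ofReal_pow (by positivity),
          ENNReal.ofReal_prod_of_nonneg fun i _ => by positivity]

theorem tsum_ediam_fundInterval_offsetDigits_rpow_le (hN : N ≠ 0) (hα : 1 ≤ α) {s : ℝ}
    (hs : 0 ≤ s) (n : ℕ) :
    ∑' w : Fin n → ℕ, Metric.ediam (fundInterval N n (offsetDigits α w)) ^ s ≤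
      ENNReal.ofReal (2 ^ s) *
        (ENNReal.ofReal (N ^ s) * ∑' j : ℕ, ENNReal.ofReal (((α : ℝ) + j) ^ (-(2 * s)))) ^ n :=
  calc _ ≤ ∑' w : Fin n → ℕ, ENNReal.ofReal (2 ^ s) * ENNReal.ofReal (N ^ s) ^ n *
        ∏ i, ENNReal.ofReal (((α : ℝ) + w i) ^ (-(2 * s))) :=
        ENNReal.tsum_le_tsum fun w => ediam_fundInterval_offsetDigits_rpow_le hN hα hs w
    _ = _ := by
        rw [ENNReal.tsum_mul_left, ENNReal.tsum_pi_fin_prod_eq_pow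
          (fun j : ℕ => ENNReal.ofReal (((α : ℝ) + j) ^ (-(2 * s)))), mul_pow, mul_assoc]

end NExpansion

/-- If `s ∈ (1/2, 1]` and `∑_{k=α}^{∞} k^{-2s} ≤ (1+N)^{-s}`, then
`dim_H(F_{α,N}) ≤ s`. -/
theorem stmt_18 (N : ℕ) (hN : 1 ≤ N) (α : ℤ) (hα : (N : ℤ) ≤ α) (s : ℝ)
    (hs : s ∈ Set.Ioc (1 / 2 : ℝ) 1)
    (h : ∑' j : ℕ, ((α : ℝ) + (j : ℝ)) ^ (-(2 * s)) ≤ (1 + (N : ℝ)) ^ (-s)) :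
    dimH (Fset N (α : ℝ)) ≤ ENNReal.ofReal s := by
  have hs0 : 0 < s := by linarith [hs.1]
  have hN0 : N ≠ 0 := by omega
  have hα1 : 1 ≤ α := by omega
  have hα1' : (1 : ℝ) ≤ α := by exact_mod_cast hα1
  have hsum := summable_add_nat_rpow_neg (a := α) (by linarith) (by linarith [hs.1] : 1 < 2 * s)
  have hsq : 1 + (N : ℝ) ≤ α ^ 2 :=
    le_sq_of_tsum_add_nat_rpow_le (by linarith) (by positivity) hs0 hsum h
  have hweights : ∑' j : ℕ, ENNReal.ofReal (((α : ℝ) + j) ^ (-(2 * s))) ≤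
      ENNReal.ofReal ((1 + N) ^ (-s)) := by
    rw [← ENNReal.ofReal_tsum_of_nonneg (fun j => by positivity) hsum]
    exact ENNReal.ofReal_le_ofReal h
  have hdiam_ratio : ENNReal.ofReal (N / (α : ℝ) ^ 2) < 1 := by
    rw [ENNReal.ofReal_lt_one, div_lt_one (by positivity)]
    linarith
  have hsum_ratio : ENNReal.ofReal (N ^ s) * ENNReal.ofReal ((1 + N) ^ (-s)) < 1 := by
    rw [← ENNReal.ofReal_mul (by positivity), ENNReal.ofReal_lt_one, Real.rpow_neg (by positivity),
      ← div_eq_mul_inv, ← Real.div_rpow (by positivity) (by positivity)]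
    exact Real.rpow_lt_one (by positivity) ((div_lt_one (by positivity)).mpr (by linarith)) hs0
  refine dimH_le_of_covers hs0.le _ Fset_subset_iUnion_fundInterval
    (ENNReal.tendsto_mul_pow_atTop_nhds_zero ENNReal.ofReal_ne_top hdiam_ratio)
    (fun n w => ediam_fundInterval_offsetDigits_le_pow hN0 hα1 w)
    (ENNReal.tendsto_mul_pow_atTop_nhds_zero (ENNReal.ofReal_ne_top (r := 2 ^ s)) hsum_ratio)
    (fun n => (tsum_ediam_fundInterval_offsetDigits_rpow_le hN0 hα1 hs0.le n).trans ?_)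
  gcongr
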